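/- Fix a real symmetric n×n matrix K. The function (A, B) ↦ tr(K A^{1/2} K B^{1/2}) is jointly concave on pairs of positive semidefinite real symmetric n×n matrices: for all positive semidefinite symmetric A_1, B_1, A_2, B_2 and all λ ∈ [0,1], tr(K (λA_1 + (1−λ)A_2)^{1/2} K (λB_1 + (1−λ)B_2)^{1/2}) ≥ λ tr(K A_1^{1/2} K B_1^{1/2}) + (1−λ) tr(K A_2^{1/2} K B_2^{1/2}). (The p = 1/2 instance of Lieb's concavity theorem, which is the key ingredient in the proof of Lemma 2.) -/

import Mathlib

open Matrix BigOperators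

/- `msqrt A` is the positive semidefinite square root of `A` (junk value `0` when `A` is
not positive semidefinite). -/
open Classical in
noncomputable def msqrt {n : ℕ} (A : Matrix (Fin n) (Fin n) ℝ) : Matrix (Fin n) (Fin n) ℝ :=
  if h : A.PosSemidef then
    (h.1.eigenvectorUnitary : Matrix (Fin n) (Fin n) ℝ) *
      diagonal (fun i => Real.sqrt (h.1.eigenvalues i)) *
      (star h.1.eigenvectorUnitary : Matrix (Fin n) (Fin n) ℝ)
  else 0

/- The matrix geometric mean `X # Y = X^{1/2} (X^{-1/2} Y X^{-1/2})^{1/2} X^{1/2}`. -/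
noncomputable def gmean {n : ℕ} (X Y : Matrix (Fin n) (Fin n) ℝ) : Matrix (Fin n) (Fin n) ℝ :=
  msqrt X * msqrt (msqrt X⁻¹ * Y * msqrt X⁻¹) * msqrt X

/-! Since `tr (K S K T) = ⟪vec K, (S ⊗ T) vec K⟫` for symmetric `K` and `S`, it suffices that
`(A, B) ↦ A^{1/2} ⊗ B^{1/2}` is jointly concave as a quadratic form; being positively homogeneous,
it is enough that it is superadditive. Now `A^{1/2} ⊗ B^{1/2}` is the geometric mean of the commuting
matrices `A ⊗ 1` and `1 ⊗ B`, and the geometric mean `C D` of `C²` and `D²` dominates every symmetric `Z`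
with `[[C², Z], [Z, D²]] ≥ 0`: if `T² = C D`, each eigenvalue `μ` of `T⁻¹ Z T⁻¹`, with eigenvector `T w`,
satisfies `Z w = μ C D w`, and testing the block inequality at `(C⁻¹ D w, w)` gives `μ ≤ 1`.
For `Z = X^{1/2} ⊗ U^{1/2} + Y^{1/2} ⊗ V^{1/2}` the block matrix is a sum of two Gram matrices, whence
superadditivity. Singular `C`, `D` are first replaced by `C + ε`, `D + ε`, and `ε → 0`.
-/

open scoped Kronecker MatrixOrder

lemma le_of_forall_pos_le_add_mul_add_sq {a b p q : ℝ}
    (h : ∀ ε > 0, a ≤ b + ε * p + ε ^ 2 * q) : a ≤ b := by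
  have hc : Continuous fun ε : ℝ => b + ε * p + ε ^ 2 * q := by fun_prop
  have := (hc.tendsto 0).mono_left (nhdsWithin_le_nhds (s := Set.Ioi 0))
  simp only [zero_mul, ne_eq, OfNat.ofNat_ne_zero, not_false_eq_true, zero_pow, add_zero] at this
  exact ge_of_tendsto this (eventually_nhdsWithin_of_forall h)

namespace Matrix

section Quadratic

variable {ι : Type*} [Fintype ι]

lemma IsHermitian.mulVec_dotProduct {A : Matrix ι ι ℝ} (hA : A.IsHermitian) (x y : ι → ℝ) :
    A *ᵥ x ⬝ᵥ y = x ⬝ᵥ A *ᵥ y := by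
  have hAt : Aᵀ = A := IsSymm.eq hA
  rw [dotProduct_mulVec, ← mulVec_transpose, hAt]

lemma IsHermitian.dotProduct_mul_mulVec {A : Matrix ι ι ℝ} (hA : A.IsHermitian)
    (B : Matrix ι ι ℝ) (x y : ι → ℝ) : x ⬝ᵥ (A * B) *ᵥ y = A *ᵥ x ⬝ᵥ B *ᵥ y := by
  rw [← mulVec_mulVec, hA.mulVec_dotProduct]

lemma IsHermitian.two_mul_dotProduct_mul_mulVec_le {P Q : Matrix ι ι ℝ} (hP : P.IsHermitian)
    (hQ : Q.IsHermitian) (x y : ι → ℝ) :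
    2 * (x ⬝ᵥ (P * Q) *ᵥ y) ≤ x ⬝ᵥ (P * P) *ᵥ x + y ⬝ᵥ (Q * Q) *ᵥ y := by
  have h := dotProduct_star_self_nonneg (P *ᵥ x - Q *ᵥ y)
  rw [star_trivial, sub_dotProduct, dotProduct_sub, dotProduct_sub, dotProduct_comm (Q *ᵥ y)] at h
  rw [hP.dotProduct_mul_mulVec, hP.dotProduct_mul_mulVec, hQ.dotProduct_mul_mulVec]
  linarith

lemma dotProduct_mulVec_le_of_posSemidef_sub {A B : Matrix ι ι ℝ} (h : (A - B).PosSemidef)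
    (x : ι → ℝ) : x ⬝ᵥ B *ᵥ x ≤ x ⬝ᵥ A *ᵥ x := by
  have := h.dotProduct_mulVec_nonneg x
  rwa [star_trivial, sub_mulVec, dotProduct_sub, sub_nonneg] at this

lemma trace_mul_mul_mul_eq_vec_dotProduct {K S T : Matrix ι ι ℝ} (hK : K.IsHermitian)
    (hS : S.IsHermitian) : trace (K * S * K * T) = vec K ⬝ᵥ (S ⊗ₖ T) *ᵥ vec K := by
  have hKt : Kᵀ = K := IsSymm.eq hK
  have hSt : Sᵀ = S := IsSymm.eq hS
  rw [kronecker_mulVec_vec, vec_dotProduct_vec, hKt, hSt, ← mul_assoc, ← mul_assoc,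
    trace_mul_cycle, ← mul_assoc, trace_mul_cycle, ← mul_assoc]

variable [DecidableEq ι]

lemma isHermitian_sqrt (A : Matrix ι ι ℝ) : (CFC.sqrt A).IsHermitian :=
  (CFC.sqrt_nonneg A).posSemidef.1

lemma PosDef.sqrt {A : Matrix ι ι ℝ} (hA : A.PosDef) : (CFC.sqrt A).PosDef :=
  isStrictlyPositive_iff_posDef.mp (.sqrt A (isStrictlyPositive_iff_posDef.mpr hA))

lemma PosDef.mulVec_ne_zero {A : Matrix ι ι ℝ} (hA : A.PosDef) {x : ι → ℝ} (hx : x ≠ 0) :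
    A *ᵥ x ≠ 0 :=
  (mulVec_injective_iff_isUnit.mpr hA.isUnit).ne_iff' (mulVec_zero A) |>.mpr hx

lemma IsHermitian.posSemidef_one_sub {W : Matrix ι ι ℝ} (hW : W.IsHermitian)
    (h : ∀ (μ : ℝ) (u : ι → ℝ), u ≠ 0 → W *ᵥ u = μ • u → μ ≤ 1) : (1 - W).PosSemidef := by
  have hW' : (1 - W).IsHermitian := isHermitian_one.sub hW
  refine hW'.posSemidef_iff_eigenvalues_nonneg.mpr fun i => ?_
  have hu := hW'.mulVec_eigenvectorBasis i
  have hne : (hW'.eigenvectorBasis i).ofLp ≠ 0 := by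
    simpa using hW'.eigenvectorBasis.orthonormal.ne_zero i
  have := h (1 - hW'.eigenvalues i) _ hne (by
    rw [sub_smul, one_smul, ← hu, sub_mulVec, one_mulVec, sub_sub_cancel])
  simp only [Pi.zero_apply]
  linarith

theorem dotProduct_mulVec_le_of_two_mul_le {C D T Z : Matrix ι ι ℝ}
    (hC : C.PosDef) (hD : D.PosDef) (hT : T.PosDef) (hTT : T * T = C * D) (hZ : Z.IsHermitian)
    (h : ∀ x y, 2 * (x ⬝ᵥ Z *ᵥ y) ≤ x ⬝ᵥ (C * C) *ᵥ x + y ⬝ᵥ (D * D) *ᵥ y) (v : ι → ℝ) :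
    v ⬝ᵥ Z *ᵥ v ≤ v ⬝ᵥ (C * D) *ᵥ v := by
  have hTu : IsUnit T.det := (isUnit_iff_isUnit_det T).mp hT.isUnit
  have hTW : T * (T⁻¹ * Z * T⁻¹) = Z * T⁻¹ := by
    rw [mul_assoc, mul_nonsing_inv_cancel_left _ _ hTu]
  have hZW : T * (T⁻¹ * Z * T⁻¹) * T = Z := by rw [hTW, nonsing_inv_mul_cancel_right _ _ hTu]
  set W := T⁻¹ * Z * T⁻¹
  have hW : W.IsHermitian := by
    have := isHermitian_conjTranspose_mul_mul T⁻¹ hZ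
    rwa [hT.inv.isHermitian.eq] at this
  have hW1 := hW.posSemidef_one_sub fun μ u hu0 hWu => by
    have hZw : Z *ᵥ (T⁻¹ *ᵥ u) = μ • (C * D) *ᵥ (T⁻¹ *ᵥ u) := by
      rw [mulVec_mulVec, ← hTW, ← mulVec_mulVec, hWu, ← hTT, mulVec_mulVec, mul_assoc,
        mul_nonsing_inv _ hTu, mul_one, mulVec_smul]
    set w := T⁻¹ *ᵥ u
    set z := D *ᵥ w
    have hz : z ≠ 0 := hD.mulVec_ne_zero (hT.inv.mulVec_ne_zero hu0)
    have hCz : C *ᵥ (C⁻¹ *ᵥ z) = z := by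
      rw [mulVec_mulVec, mul_nonsing_inv _ ((isUnit_iff_isUnit_det C).mp hC.isUnit), one_mulVec]
    have hzz : 0 < z ⬝ᵥ z :=
      lt_of_le_of_ne (dotProduct_star_self_nonneg z) (Ne.symm (dotProduct_self_eq_zero.not.mpr hz))
    have key := h (C⁻¹ *ᵥ z) w
    rw [hZw, dotProduct_smul, hC.isHermitian.dotProduct_mul_mulVec, hCz,
      hC.isHermitian.dotProduct_mul_mulVec, hCz, hD.isHermitian.dotProduct_mul_mulVec,
      smul_eq_mul] at key
    nlinarith
  calc v ⬝ᵥ Z *ᵥ v = T *ᵥ v ⬝ᵥ W *ᵥ (T *ᵥ v) := by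
        rw [← hZW, ← mulVec_mulVec, hT.isHermitian.dotProduct_mul_mulVec, mulVec_mulVec]
    _ ≤ T *ᵥ v ⬝ᵥ T *ᵥ v := by
        simpa using dotProduct_mulVec_le_of_posSemidef_sub hW1 (T *ᵥ v)
    _ = v ⬝ᵥ (C * D) *ᵥ v := by rw [← hTT, hT.isHermitian.dotProduct_mul_mulVec]

end Quadratic

section Kronecker

variable {ι κ : Type*}

lemma IsHermitian.kronecker {a : Matrix ι ι ℝ} {p : Matrix κ κ ℝ} (ha : a.IsHermitian)
    (hp : p.IsHermitian) : (a ⊗ₖ p).IsHermitian := by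
  rw [IsHermitian, conjTranspose_kronecker, ha.eq, hp.eq]

variable [DecidableEq ι] [DecidableEq κ]

lemma kronecker_add_smul_one (c : Matrix ι ι ℝ) (d : Matrix κ κ ℝ) (ε : ℝ) :
    (c + ε • 1) ⊗ₖ (d + ε • 1) = c ⊗ₖ d + ε • (c ⊗ₖ 1 + 1 ⊗ₖ d) + ε ^ 2 • 1 := by
  rw [add_kronecker, kronecker_add, kronecker_add, smul_kronecker, kronecker_smul, kronecker_smul,
    smul_kronecker, one_kronecker_one]
  module

variable [Fintype ι] [Fintype κ]

lemma two_mul_dotProduct_kronecker_mulVec_le {a : Matrix ι ι ℝ} {p : Matrix κ κ ℝ}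
    (ha : a.IsHermitian) (hp : p.IsHermitian) (x y : ι × κ → ℝ) :
    2 * (x ⬝ᵥ (a ⊗ₖ p) *ᵥ y) ≤ x ⬝ᵥ ((a * a) ⊗ₖ 1) *ᵥ x + y ⬝ᵥ (1 ⊗ₖ (p * p)) *ᵥ y := by
  have h := (ha.kronecker isHermitian_one).two_mul_dotProduct_mul_mulVec_le
    (isHermitian_one.kronecker hp) x y
  simpa only [← mul_kronecker_mul, mul_one, one_mul] using h

lemma PosSemidef.add_smul_one_mul_self_sub {c : Matrix ι ι ℝ} (hc : c.PosSemidef) {ε : ℝ}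
    (hε : 0 ≤ ε) : ((c + ε • 1) * (c + ε • 1) - c * c).PosSemidef := by
  have h : (c + ε • 1) * (c + ε • 1) - c * c = (2 * ε) • c + ε ^ 2 • 1 := by
    simp only [add_mul, mul_add, smul_mul_assoc, mul_smul_comm, mul_one, one_mul]
    module
  rw [h]
  exact (hc.smul (by positivity)).add (PosSemidef.one.smul (by positivity))

theorem dotProduct_mulVec_le_sqrt_kronecker_sqrt {X : Matrix ι ι ℝ} {U : Matrix κ κ ℝ}
    {Z : Matrix (ι × κ) (ι × κ) ℝ} (hX : X.PosSemidef) (hU : U.PosSemidef) (hZ : Z.IsHermitian)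
    (h : ∀ x y, 2 * (x ⬝ᵥ Z *ᵥ y) ≤ x ⬝ᵥ (X ⊗ₖ 1) *ᵥ x + y ⬝ᵥ (1 ⊗ₖ U) *ᵥ y) (v : ι × κ → ℝ) :
    v ⬝ᵥ Z *ᵥ v ≤ v ⬝ᵥ (CFC.sqrt X ⊗ₖ CFC.sqrt U) *ᵥ v := by
  set c := CFC.sqrt X
  set d := CFC.sqrt U
  have hc : c.PosSemidef := (CFC.sqrt_nonneg X).posSemidef
  have hd : d.PosSemidef := (CFC.sqrt_nonneg U).posSemidef
  have hcc : c * c = X := CFC.sqrt_mul_sqrt_self X hX.nonneg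
  have hdd : d * d = U := CFC.sqrt_mul_sqrt_self U hU.nonneg
  refine le_of_forall_pos_le_add_mul_add_sq (p := v ⬝ᵥ (c ⊗ₖ 1 + 1 ⊗ₖ d) *ᵥ v) (q := v ⬝ᵥ v)
    fun ε hε => ?_
  have hcε : (c + ε • 1).PosDef := PosDef.posSemidef_add hc (PosDef.one.smul hε)
  have hdε : (d + ε • 1).PosDef := PosDef.posSemidef_add hd (PosDef.one.smul hε)
  have hblock : ∀ x y, 2 * (x ⬝ᵥ Z *ᵥ y) ≤
      x ⬝ᵥ ((c + ε • 1) ⊗ₖ 1 * (c + ε • 1) ⊗ₖ 1) *ᵥ x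
        + y ⬝ᵥ (1 ⊗ₖ (d + ε • 1) * 1 ⊗ₖ (d + ε • 1)) *ᵥ y := by
    intro x y
    simp only [← mul_kronecker_mul, mul_one]
    refine (h x y).trans (add_le_add (dotProduct_mulVec_le_of_posSemidef_sub ?_ x)
      (dotProduct_mulVec_le_of_posSemidef_sub ?_ y))
    · have hsub : ((c + ε • 1) * (c + ε • 1)) ⊗ₖ (1 : Matrix κ κ ℝ) - X ⊗ₖ 1
          = ((c + ε • 1) * (c + ε • 1) - c * c) ⊗ₖ 1 := by
        rw [hcc]; ext; simp [sub_mul]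
      rw [hsub]
      exact (hc.add_smul_one_mul_self_sub hε.le).kronecker PosSemidef.one
    · have hsub : (1 : Matrix ι ι ℝ) ⊗ₖ ((d + ε • 1) * (d + ε • 1)) - 1 ⊗ₖ U
          = 1 ⊗ₖ ((d + ε • 1) * (d + ε • 1) - d * d) := by
        rw [hdd]; ext; simp [mul_sub]
      rw [hsub]
      exact PosSemidef.one.kronecker (hd.add_smul_one_mul_self_sub hε.le)
  have key := dotProduct_mulVec_le_of_two_mul_le (hcε.kronecker PosDef.one)
    (PosDef.one.kronecker hdε) (hcε.sqrt.kronecker hdε.sqrt) (by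
      rw [← mul_kronecker_mul, ← mul_kronecker_mul, CFC.sqrt_mul_sqrt_self _ hcε.posSemidef.nonneg,
        CFC.sqrt_mul_sqrt_self _ hdε.posSemidef.nonneg, mul_one, one_mul]) hZ hblock v
  rwa [← mul_kronecker_mul, mul_one, one_mul, kronecker_add_smul_one, add_mulVec, add_mulVec,
    smul_mulVec, smul_mulVec, one_mulVec, dotProduct_add, dotProduct_add, dotProduct_smul,
    dotProduct_smul, smul_eq_mul, smul_eq_mul] at key

theorem dotProduct_sqrt_kronecker_add_le {X Y : Matrix ι ι ℝ} {U V : Matrix κ κ ℝ}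
    (hX : X.PosSemidef) (hY : Y.PosSemidef) (hU : U.PosSemidef) (hV : V.PosSemidef)
    (v : ι × κ → ℝ) :
    v ⬝ᵥ (CFC.sqrt X ⊗ₖ CFC.sqrt U + CFC.sqrt Y ⊗ₖ CFC.sqrt V) *ᵥ v
      ≤ v ⬝ᵥ (CFC.sqrt (X + Y) ⊗ₖ CFC.sqrt (U + V)) *ᵥ v := by
  refine dotProduct_mulVec_le_sqrt_kronecker_sqrt (hX.add hY) (hU.add hV)
    (((isHermitian_sqrt X).kronecker (isHermitian_sqrt U)).add
      ((isHermitian_sqrt Y).kronecker (isHermitian_sqrt V))) (fun x y => ?_) v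
  have h₁ := two_mul_dotProduct_kronecker_mulVec_le (isHermitian_sqrt X) (isHermitian_sqrt U) x y
  have h₂ := two_mul_dotProduct_kronecker_mulVec_le (isHermitian_sqrt Y) (isHermitian_sqrt V) x y
  rw [CFC.sqrt_mul_sqrt_self X hX.nonneg, CFC.sqrt_mul_sqrt_self U hU.nonneg] at h₁
  rw [CFC.sqrt_mul_sqrt_self Y hY.nonneg, CFC.sqrt_mul_sqrt_self V hV.nonneg] at h₂
  rw [add_kronecker, kronecker_add]
  simp only [add_mulVec, dotProduct_add]
  linarith

omit [Fintype κ] [DecidableEq κ] in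
lemma sqrt_smul {A : Matrix ι ι ℝ} (hA : A.PosSemidef) {t : ℝ} (ht : 0 ≤ t) :
    CFC.sqrt (t • A) = √t • CFC.sqrt A :=
  CFC.sqrt_unique (by rw [smul_mul_smul_comm, Real.mul_self_sqrt ht, CFC.sqrt_mul_sqrt_self A])
    (smul_nonneg (Real.sqrt_nonneg t) (CFC.sqrt_nonneg A))

theorem dotProduct_sqrt_kronecker_sqrt_concave {A₁ A₂ : Matrix ι ι ℝ} {B₁ B₂ : Matrix κ κ ℝ}
    (hA₁ : A₁.PosSemidef) (hA₂ : A₂.PosSemidef) (hB₁ : B₁.PosSemidef) (hB₂ : B₂.PosSemidef)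
    {l : ℝ} (hl0 : 0 ≤ l) (hl1 : l ≤ 1) (v : ι × κ → ℝ) :
    l * (v ⬝ᵥ (CFC.sqrt A₁ ⊗ₖ CFC.sqrt B₁) *ᵥ v) + (1 - l) * (v ⬝ᵥ (CFC.sqrt A₂ ⊗ₖ CFC.sqrt B₂) *ᵥ v)
      ≤ v ⬝ᵥ (CFC.sqrt (l • A₁ + (1 - l) • A₂) ⊗ₖ CFC.sqrt (l • B₁ + (1 - l) • B₂)) *ᵥ v := by
  have hl1' : 0 ≤ 1 - l := sub_nonneg.mpr hl1
  have h := dotProduct_sqrt_kronecker_add_le (hA₁.smul hl0) (hA₂.smul hl1') (hB₁.smul hl0)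
    (hB₂.smul hl1') v
  rwa [sqrt_smul hA₁ hl0, sqrt_smul hA₂ hl1', sqrt_smul hB₁ hl0, sqrt_smul hB₂ hl1',
    smul_kronecker, kronecker_smul, smul_kronecker, kronecker_smul, smul_smul, smul_smul,
    Real.mul_self_sqrt hl0, Real.mul_self_sqrt hl1', add_mulVec, smul_mulVec, smul_mulVec,
    dotProduct_add, dotProduct_smul, dotProduct_smul, smul_eq_mul, smul_eq_mul] at h

end Kronecker

end Matrix

lemma msqrt_eq_sqrt {n : ℕ} {A : Matrix (Fin n) (Fin n) ℝ} (h : A.PosSemidef) :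
    msqrt A = CFC.sqrt A := by
  rw [CFC.sqrt_eq_cfc, cfc_nnreal_eq_real _ A h.nonneg, h.1.cfc_eq, msqrt, dif_pos h,
    IsHermitian.cfc, Unitary.conjStarAlgAut_apply]
  congr 3
  funext i
  simp [Real.coe_sqrt, Real.coe_toNNReal', h.eigenvalues_nonneg i]

theorem stmt12 {n : ℕ} (K : Matrix (Fin n) (Fin n) ℝ) (hK : K.IsHermitian)
    (A₁ B₁ A₂ B₂ : Matrix (Fin n) (Fin n) ℝ)
    (hA₁ : A₁.PosSemidef) (hB₁ : B₁.PosSemidef) (hA₂ : A₂.PosSemidef) (hB₂ : B₂.PosSemidef)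
    (l : ℝ) (hl0 : 0 ≤ l) (hl1 : l ≤ 1) :
    l * Matrix.trace (K * msqrt A₁ * K * msqrt B₁)
      + (1 - l) * Matrix.trace (K * msqrt A₂ * K * msqrt B₂)
      ≤ Matrix.trace (K * msqrt (l • A₁ + (1 - l) • A₂) * K * msqrt (l • B₁ + (1 - l) • B₂)) := by
  have hl1' : 0 ≤ 1 - l := sub_nonneg.mpr hl1
  rw [msqrt_eq_sqrt hA₁, msqrt_eq_sqrt hB₁, msqrt_eq_sqrt hA₂, msqrt_eq_sqrt hB₂,
    msqrt_eq_sqrt ((hA₁.smul hl0).add (hA₂.smul hl1')),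
    msqrt_eq_sqrt ((hB₁.smul hl0).add (hB₂.smul hl1')),
    trace_mul_mul_mul_eq_vec_dotProduct hK (isHermitian_sqrt _),
    trace_mul_mul_mul_eq_vec_dotProduct hK (isHermitian_sqrt _),
    trace_mul_mul_mul_eq_vec_dotProduct hK (isHermitian_sqrt _)]
  exact dotProduct_sqrt_kronecker_sqrt_concave hA₁ hA₂ hB₁ hB₂ hl0 hl1 (vec K)
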